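/- arXiv:2208.09882 — 3 statements merged into one kernel-verified Lean document; each statement's English description precedes it below -/
import Mathlib

section
/- Let A ≥ 1, A' and k be integers, let κ ∈ {0,1}, and let m ≥ 1 be an integer. Then there exist formal Laurent series 𝓜₀, 𝓜₁, …, 𝓜_{m−1} over ℚ, each with support contained in {A·j : j a nonnegative integer}, such that f((−1)^κ q^{k+A'}, (−1)^κ q^{−k+(A−A')})^m = Σ_{s=0}^{m−1} (−1)^{κ·s} · q^{(k+A')·s} · f((−1)^{κ·m} q^{km+As+A'm}, (−1)^{κ·m} q^{−km−As+(A−A')m}) · 𝓜_s, and moreover 𝓜_s = 𝓜_{m−s} for every integer s with 1 ≤ s ≤ m−1. -/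
/-!
Common setup: Ramanujan theta series as formal Laurent series over `ℚ`
(`LaurentSeries ℚ = HahnSeries ℤ ℚ`), and the huffing operator `H_M`.
-/

noncomputable section

open scoped Classical

namespace ThetaVanish

/-- A subset of `ℤ` that is bounded below is partially well-ordered. -/
theorem isPWO_of_subset_Ici {a : ℤ} {s : Set ℤ} (h : s ⊆ Set.Ici a) : s.IsPWO := by
  have hWF : s.IsWF := by
    rw [Set.isWF_iff_no_descending_seq]
    intro f hf hmem
    have key : ∀ n : ℕ, f n + n ≤ f 0 := by
      intro n
      induction n with
      | zero => simp
      | succ k ih =>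
        have h2 : f (k + 1) < f k := hf (Nat.lt_succ_self k)
        push_cast
        push_cast at ih
        omega
    have h1 := key (f 0 - a + 1).toNat
    have h2 : a ≤ f ((f 0 - a + 1).toNat) := h (hmem _)
    have h3 : a ≤ f 0 := h (hmem 0)
    omega
  exact hWF.isPWO

/-- The coefficient of `q^N` in Ramanujan's theta series `f(ε q^r, ε q^s)`:
the (finite, when `r + s > 0`) sum of `ε^n` over all integers `n` with
`r·n(n+1)/2 + s·n(n-1)/2 = N`. -/
def thetaCoeff (ε r s : ℤ) : ℤ → ℚ := fun N =>
  ∑ᶠ n : ℤ, if r * (n * (n + 1) / 2) + s * (n * (n - 1) / 2) = N then (ε : ℚ) ^ n else 0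

theorem thetaCoeff_support (ε r s : ℤ) (h : 0 < r + s) :
    Function.support (thetaCoeff ε r s) ⊆ Set.Ici (-(r - s) ^ 2) := by
  intro N hN
  simp only [Function.mem_support, ne_eq] at hN
  rw [Set.mem_Ici]
  by_contra hcon
  push_neg at hcon
  apply hN
  apply finsum_eq_zero_of_forall_eq_zero
  intro n
  rw [if_neg]
  intro hQ
  obtain ⟨c, hc⟩ := Int.even_mul_succ_self n
  obtain ⟨e, he⟩ := Int.even_mul_pred_self n
  have hc' : n * (n + 1) = 2 * c := by omega
  have he' : n * (n - 1) = 2 * e := by omega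
  have e1 : n * (n + 1) / 2 = c := by omega
  have e2 : n * (n - 1) / 2 = e := by omega
  rw [e1, e2] at hQ
  have key : 2 * N = (r + s) * n ^ 2 + (r - s) * n := by
    linear_combination -2 * hQ - r * hc' - s * he'
  nlinarith [sq_nonneg (2 * n + r - s), sq_nonneg (r - s),
    mul_nonneg (show (0:ℤ) ≤ r + s - 1 by omega) (sq_nonneg n)]

/-- Ramanujan's theta series `f(ε q^r, ε q^s)` (for a sign `ε ∈ {1, -1}` and
`r + s > 0`), as a formal Laurent series over `ℚ`; junk value `0` if `r + s ≤ 0`. -/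
def theta (ε r s : ℤ) : LaurentSeries ℚ :=
  if h : 0 < r + s then
    { coeff := thetaCoeff ε r s
      isPWO_support' := isPWO_of_subset_Ici (thetaCoeff_support ε r s h) }
  else 0

/-- The huffing operator `H_M`: keep only the coefficients whose index is a
multiple of `M`. -/
def huff (M : ℤ) (G : LaurentSeries ℚ) : LaurentSeries ℚ where
  coeff N := if M ∣ N then G.coeff N else 0
  isPWO_support' := by
    apply Set.IsPWO.mono G.isPWO_support
    intro N hN
    simp only [Function.mem_support, ne_eq] at hN
    rw [HahnSeries.mem_support]
    by_cases hd : M ∣ N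
    · rwa [if_pos hd] at hN
    · exact absurd (if_neg hd) hN

/-!
Write `f(ε q^r, ε q^s) = ∑ₙ εⁿ q^{(r+s) T(n) + r n}` with `T(n) = n(n-1)/2`, so that its `m`-th
power is a sum over `v ∈ ℤ^m`. Every such `v` is uniquely `w + t·(1,…,1)` with `t ∈ ℤ` and
`∑ w = c ∈ [0, m)`, and since `T(w + t) = T(w) + T(t) + w t`, with `A = r + s` the exponent splits
as `r c + (A m T(t) + (r m + A c) t) + A ∑ T(wᵢ)`. Summing over `t` and `w` separately, the class
`c` contributes `εᶜ q^{rc} f(εᵐ q^{rm+Ac}, εᵐ q^{sm-Ac}) 𝓜_c` with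
`𝓜_c = ∑_{∑ w = c} q^{A ∑ T(wᵢ)}`.
The symmetry `𝓜_c = 𝓜_{m-c}` comes from `w ↦ 1 - w`, as `T(1 - n) = T(n)`.
-/

end ThetaVanish

theorem zpow_sum₀ {ι G₀ : Type*} [CommGroupWithZero G₀] {a : G₀} (ha : a ≠ 0) (s : Finset ι)
    (f : ι → ℤ) : a ^ (∑ i ∈ s, f i) = ∏ i ∈ s, a ^ f i := by
  induction s using Finset.cons_induction with
  | empty => simp
  | cons j s hj ih => rw [Finset.sum_cons, Finset.prod_cons, zpow_add₀ ha, ih]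

namespace HahnSeries

theorem prod_single {Γ R : Type*} [AddCommMonoid Γ] [PartialOrder Γ] [IsOrderedCancelAddMonoid Γ]
    [CommSemiring R] {ι : Type*} (s : Finset ι) (g : ι → Γ) (r : ι → R) :
    ∏ i ∈ s, single (g i) (r i) = single (∑ i ∈ s, g i) (∏ i ∈ s, r i) := by
  induction s using Finset.cons_induction with
  | empty => simp
  | cons j s hj ih =>
    rw [Finset.prod_cons, Finset.sum_cons, Finset.prod_cons, ih, single_mul_single]

namespace SummableFamily

variable {α : Type*}

section Partition

variable {Γ R : Type*} [PartialOrder Γ] [AddCommMonoid R]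

theorem finsetSum_apply {ι : Type*} (t : Finset ι) (s : ι → SummableFamily Γ R α) (a : α) :
    (∑ i ∈ t, s i) a = ∑ i ∈ t, s i a :=
  map_sum (⟨⟨fun s ↦ s a, rfl⟩, fun _ _ ↦ add_apply⟩ : SummableFamily Γ R α →+ HahnSeries Γ R) s t

theorem hsum_finsetSum {ι : Type*} (t : Finset ι) (s : ι → SummableFamily Γ R α) :
    (∑ i ∈ t, s i).hsum = ∑ i ∈ t, (s i).hsum :=
  map_sum (⟨⟨hsum, hsum_zero⟩, fun _ _ ↦ hsum_add⟩ : SummableFamily Γ R α →+ HahnSeries Γ R) s t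

theorem hsum_eq_sum_of_partition {ι : Type*} {β : ι → Type*} (s : SummableFamily Γ R α)
    (t : Finset ι) (u : ∀ i, SummableFamily Γ R (β i)) (e : ∀ i, β i ↪ α)
    (hu : ∀ i ∈ t, ∀ b, s (e i b) = u i b)
    (hcover : ∀ a, ∃ i ∈ t, a ∈ Set.range (e i))
    (hdisj : (t : Set ι).PairwiseDisjoint fun i ↦ Set.range (e i)) :
    s.hsum = ∑ i ∈ t, (u i).hsum := by
  have hs : s = ∑ i ∈ t, (u i).embDomain (e i) := by
    ext1 a
    obtain ⟨i, hi, b, rfl⟩ := hcover a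
    rw [finsetSum_apply, Finset.sum_eq_single_of_mem i hi, embDomain_image, hu i hi]
    intro j hj hji
    refine embDomain_of_notMem_range _ _ fun hb ↦ ?_
    exact Set.disjoint_left.mp (hdisj hj hi hji) hb (Set.mem_range_self b)
  rw [hs, hsum_finsetSum]
  exact Finset.sum_congr rfl fun i _ ↦ hsum_embDomain _ _

end Partition

variable {Γ R : Type*} [AddCommMonoid Γ] [PartialOrder Γ] [IsOrderedCancelAddMonoid Γ]
  [CommSemiring R]

def pow (s : SummableFamily Γ R α) : (m : ℕ) → SummableFamily Γ R (Fin m → α)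
  | 0 => Equiv (Equiv.ofUnique Unit (Fin 0 → α)) (single () 1)
  | m + 1 => Equiv (Fin.consEquiv fun _ ↦ α) (s.mul (s.pow m))

theorem pow_apply (s : SummableFamily Γ R α) (m : ℕ) (v : Fin m → α) :
    s.pow m v = ∏ i, s (v i) := by
  induction m with
  | zero => rfl
  | succ m ih =>
    rw [Fin.prod_univ_succ, ← ih]
    rfl

theorem hsum_pow (s : SummableFamily Γ R α) (m : ℕ) : (s.pow m).hsum = s.hsum ^ m := by
  induction m with
  | zero => rw [pow, hsum_equiv, hsum_single, pow_zero]
  | succ m ih => rw [pow, hsum_equiv, hsum_mul, ih, pow_succ']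

end SummableFamily

end HahnSeries

namespace ThetaVanish

open HahnSeries

def tri (n : ℤ) : ℤ := n * (n - 1) / 2

theorem two_mul_tri (n : ℤ) : 2 * tri n = n * (n - 1) := by
  obtain ⟨e, he⟩ := Int.even_mul_pred_self n
  unfold tri
  omega

theorem tri_nonneg (n : ℤ) : 0 ≤ tri n := by
  have := two_mul_tri n
  rcases le_or_gt n 0 with hn | hn <;> nlinarith

theorem neg_le_tri (n : ℤ) : -n ≤ tri n := by
  have := two_mul_tri n
  nlinarith [sq_nonneg (n + 1)]

theorem le_tri_add_one (n : ℤ) : n ≤ tri n + 1 := by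
  have := two_mul_tri n
  nlinarith [sq_nonneg (n - 2)]

theorem tri_add (a b : ℤ) : tri (a + b) = tri a + tri b + a * b := by
  have := two_mul_tri (a + b)
  have := two_mul_tri a
  have := two_mul_tri b
  linarith

theorem tri_one_sub (n : ℤ) : tri (1 - n) = tri n := by
  have := two_mul_tri (1 - n)
  have := two_mul_tri n
  linarith

def thetaExp (r s n : ℤ) : ℤ := r * (n * (n + 1) / 2) + s * (n * (n - 1) / 2)

theorem thetaExp_eq (r s n : ℤ) : thetaExp r s n = (r + s) * tri n + r * n := by
  have h : n * (n + 1) / 2 = tri n + n := by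
    have := two_mul_tri n
    obtain ⟨c, hc⟩ := Int.even_mul_succ_self n
    have : n * (n + 1) = n * (n - 1) + 2 * n := by ring
    omega
  rw [thetaExp, h]
  change r * (tri n + n) + s * tri n = _
  ring

theorem two_mul_thetaExp (r s n : ℤ) : 2 * thetaExp r s n = (r + s) * n ^ 2 + (r - s) * n := by
  rw [thetaExp_eq]
  linear_combination (r + s) * two_mul_tri n

theorem neg_sq_le_thetaExp {r s : ℤ} (h : 0 < r + s) (n : ℤ) : -(r - s) ^ 2 ≤ thetaExp r s n := by
  have := two_mul_thetaExp r s n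
  nlinarith [sq_nonneg (2 * n + r - s), sq_nonneg (r - s),
    mul_nonneg (show (0 : ℤ) ≤ r + s - 1 by omega) (sq_nonneg n)]

theorem abs_le_of_thetaExp_le {r s N n : ℤ} (h : 0 < r + s) (hN : thetaExp r s n ≤ N) :
    |n| ≤ |r - s| + 2 * |N| := by
  have h2 := two_mul_thetaExp r s n
  have hsq : n ^ 2 = |n| * |n| := by rw [abs_mul_abs_self, sq]
  have hlin : -(|r - s| * |n|) ≤ (r - s) * n := by
    rw [← abs_mul]
    exact neg_abs_le _
  have hN' : N ≤ |N| := le_abs_self N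
  by_contra! hn
  nlinarith [abs_nonneg n, abs_nonneg N, abs_nonneg (r - s)]

theorem finite_setOf_thetaExp_eq {r s : ℤ} (h : 0 < r + s) (N : ℤ) :
    {n | thetaExp r s n = N}.Finite :=
  (Set.finite_Icc (-(|r - s| + 2 * |N|)) (|r - s| + 2 * |N|)).subset fun _ hn ↦
    abs_le.mp (abs_le_of_thetaExp_le h (le_of_eq hn))

def thetaFamily (ε r s : ℤ) (h : 0 < r + s) : SummableFamily ℤ ℚ ℤ where
  toFun n := single (thetaExp r s n) ((ε : ℚ) ^ n)
  isPWO_iUnion_support' := by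
    refine isPWO_of_subset_Ici (a := -(r - s) ^ 2) (Set.iUnion_subset fun n g hg ↦ ?_)
    rw [Set.mem_singleton_iff.mp (support_single_subset hg)]
    exact neg_sq_le_thetaExp h n
  finite_co_support' N := (finite_setOf_thetaExp_eq h N).subset fun n hn ↦ by
    by_contra hne
    exact hn (coeff_single_of_ne (Ne.symm hne))

theorem theta_eq_hsum (ε r s : ℤ) (h : 0 < r + s) : theta ε r s = (thetaFamily ε r s h).hsum := by
  rw [theta, dif_pos h]
  ext N
  rw [SummableFamily.coeff_hsum]
  refine finsum_congr fun n ↦ ?_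
  change _ = (single (thetaExp r s n) ((ε : ℚ) ^ n)).coeff N
  simp only [coeff_single, thetaExp, eq_comm]
  congr 1

def triSum {m : ℕ} (w : Fin m → ℤ) : ℤ := ∑ i, tri (w i)

theorem triSum_nonneg {m : ℕ} (w : Fin m → ℤ) : 0 ≤ triSum w :=
  Finset.sum_nonneg fun i _ ↦ tri_nonneg (w i)

theorem finite_setOf_triSum_le (m : ℕ) (N : ℤ) : {w : Fin m → ℤ | triSum w ≤ N}.Finite := by
  refine (Set.Finite.pi fun _ ↦ Set.finite_Icc (-N) (N + 1) : (Set.univ.pi _).Finite).subset ?_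
  intro w hw i _
  have hi : tri (w i) ≤ N :=
    (Finset.single_le_sum (fun j _ ↦ tri_nonneg (w j)) (Finset.mem_univ i)).trans hw
  exact ⟨by linarith [neg_le_tri (w i)], by linarith [le_tri_add_one (w i)]⟩

abbrev SumFiber (m : ℕ) (c : ℤ) : Type := {w : Fin m → ℤ // ∑ i, w i = c}

def SumFiber.reflect (m : ℕ) (c : ℤ) : SumFiber m c ≃ SumFiber m (m - c) where
  toFun w := ⟨fun i ↦ 1 - w.1 i, by simp [Finset.sum_sub_distrib, w.2]⟩
  invFun w := ⟨fun i ↦ 1 - w.1 i, by simp [Finset.sum_sub_distrib, w.2]⟩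
  left_inv w := by ext; simp
  right_inv w := by ext; simp

def triSumFamily (A : ℤ) (hA : 0 < A) (m : ℕ) (c : ℤ) : SummableFamily ℤ ℚ (SumFiber m c) where
  toFun w := single (A * triSum w.1) 1
  isPWO_iUnion_support' := by
    refine isPWO_of_subset_Ici (a := 0) (Set.iUnion_subset fun w g hg ↦ ?_)
    rw [Set.mem_singleton_iff.mp (support_single_subset hg)]
    exact mul_nonneg hA.le (triSum_nonneg w.1)
  finite_co_support' g := by
    refine ((finite_setOf_triSum_le m g).preimage Subtype.val_injective.injOn).subset
      fun w hw ↦ ?_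
    have hg : A * triSum w.1 = g := by
      by_contra hne
      exact hw (coeff_single_of_ne (Ne.symm hne))
    change triSum w.1 ≤ g
    nlinarith [triSum_nonneg w.1]

/-- The series `𝓜_c` of the expansion. -/
def triSumSeries (A : ℤ) (hA : 0 < A) (m : ℕ) (c : ℤ) : LaurentSeries ℚ :=
  (triSumFamily A hA m c).hsum

theorem support_triSumSeries_subset (A : ℤ) (hA : 0 < A) (m : ℕ) (c : ℤ) :
    (triSumSeries A hA m c).support ⊆ {x | ∃ j : ℕ, x = A * j} := by
  intro x hx
  obtain ⟨w, hw⟩ := Set.mem_iUnion.mp (SummableFamily.support_hsum_subset hx)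
  refine ⟨(triSum w.1).toNat, ?_⟩
  rw [Int.toNat_of_nonneg (triSum_nonneg w.1)]
  exact Set.mem_singleton_iff.mp (support_single_subset hw)

theorem triSumSeries_sub (A : ℤ) (hA : 0 < A) (m : ℕ) (c : ℤ) :
    triSumSeries A hA m (m - c) = triSumSeries A hA m c := by
  rw [triSumSeries, triSumSeries, ← SummableFamily.hsum_equiv (SumFiber.reflect m c)]
  congr 1
  ext1 w
  change single (A * triSum w.1) 1 = single (A * triSum fun i ↦ 1 - w.1 i) 1
  simp only [triSum, tri_one_sub]

section Shift

variable {m : ℕ} {c : ℤ}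

theorem SumFiber.sum_add_const (w : SumFiber m c) (t : ℤ) : ∑ i, (w.1 i + t) = c + m * t := by
  simp [Finset.sum_add_distrib, w.2]

variable (m) in
def shiftEmbedding [NeZero m] (c : ℤ) : ℤ × SumFiber m c ↪ (Fin m → ℤ) where
  toFun p i := p.2.1 i + p.1
  inj' := by
    rintro ⟨t, w⟩ ⟨t', w'⟩ h
    have ht : t = t' := by
      have := congrArg (fun v : Fin m → ℤ ↦ ∑ i, v i) h
      simp only [SumFiber.sum_add_const] at this
      exact mul_left_cancel₀ (Nat.cast_ne_zero.mpr (NeZero.ne m)) (add_left_cancel this)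
    subst ht
    refine Prod.ext rfl (Subtype.ext (funext fun i ↦ ?_))
    simpa using congrFun h i

theorem mem_range_shiftEmbedding_iff [NeZero m] (hc₀ : 0 ≤ c) (hcm : c < m) (v : Fin m → ℤ) :
    v ∈ Set.range (shiftEmbedding m c) ↔ (∑ i, v i) % m = c := by
  constructor
  · rintro ⟨⟨t, w⟩, rfl⟩
    change (∑ i, (w.1 i + t)) % m = c
    rw [SumFiber.sum_add_const, Int.add_mul_emod_self_left, Int.emod_eq_of_lt hc₀ hcm]
  · intro hv
    set t := (∑ i, v i) / m
    have hw : ∑ i, (v i - t) = c := by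
      simp only [Finset.sum_sub_distrib, Finset.sum_const, Finset.card_univ, Fintype.card_fin,
        nsmul_eq_mul]
      have := Int.emod_add_mul_ediv (∑ i, v i) m
      linarith
    exact ⟨(t, ⟨_, hw⟩), funext fun i ↦ sub_add_cancel (v i) t⟩

variable (m) [NeZero m]

theorem exists_mem_range_shiftEmbedding (v : Fin m → ℤ) :
    ∃ c ∈ Finset.range m, v ∈ Set.range (shiftEmbedding m c) := by
  have hm : 0 < (m : ℤ) := by exact_mod_cast Nat.pos_of_neZero m
  have hmod₀ := Int.emod_nonneg (∑ i, v i) hm.ne'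
  have hmodm := Int.emod_lt_of_pos (∑ i, v i) hm
  refine ⟨((∑ i, v i) % m).toNat, Finset.mem_range.mpr (by omega), ?_⟩
  rw [mem_range_shiftEmbedding_iff (by omega) (by omega)]
  omega

theorem pairwiseDisjoint_range_shiftEmbedding :
    (Finset.range m : Set ℕ).PairwiseDisjoint fun c ↦ Set.range (shiftEmbedding m c) := by
  intro i hi j hj hij
  have hi' : (i : ℤ) < m := by exact_mod_cast Finset.mem_range.mp hi
  have hj' : (j : ℤ) < m := by exact_mod_cast Finset.mem_range.mp hj
  refine Set.disjoint_left.mpr fun v hvi hvj ↦ hij ?_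
  rw [mem_range_shiftEmbedding_iff (by omega) hi'] at hvi
  rw [mem_range_shiftEmbedding_iff (by omega) hj'] at hvj
  exact_mod_cast hvi.symm.trans hvj

end Shift

theorem sum_thetaExp_add_const {r s A : ℤ} (hrs : r + s = A) {m : ℕ} {c : ℤ} (w : SumFiber m c)
    (t : ℤ) : ∑ i, thetaExp r s (w.1 i + t) =
      r * c + thetaExp (r * m + A * c) (s * m - A * c) t + A * triSum w.1 := by
  simp only [thetaExp_eq, tri_add, triSum, Finset.sum_add_distrib, ← Finset.mul_sum,
    ← Finset.sum_mul, w.2, Finset.sum_const, Finset.card_univ, Fintype.card_fin, nsmul_eq_mul]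
  subst hrs
  ring

theorem thetaFamily_pow_shiftEmbedding {ε r s A : ℤ} (hε : ε ≠ 0) (h : 0 < r + s) (hA : 0 < A)
    (hrs : r + s = A) {m : ℕ} [NeZero m] {c : ℤ} (hc : 0 < (r * m + A * c) + (s * m - A * c))
    (w : SumFiber m c) (t : ℤ) :
    (thetaFamily ε r s h).pow m (shiftEmbedding m c (t, w)) =
      single (r * c) ((ε : ℚ) ^ c) *
        (thetaFamily (ε ^ m) _ _ hc t * triSumFamily A hA m c w) := by
  have hε' : (ε : ℚ) ≠ 0 := Int.cast_ne_zero.mpr hε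
  rw [SummableFamily.pow_apply]
  change ∏ i, single (thetaExp r s (w.1 i + t)) ((ε : ℚ) ^ (w.1 i + t)) =
    single (r * c) ((ε : ℚ) ^ c) *
      (single (thetaExp (r * m + A * c) (s * m - A * c) t) (((ε ^ m : ℤ) : ℚ) ^ t) *
        single (A * triSum w.1) 1)
  rw [prod_single, ← zpow_sum₀ hε', sum_thetaExp_add_const hrs, SumFiber.sum_add_const,
    single_mul_single, single_mul_single, add_assoc, zpow_add₀ hε', zpow_mul]
  push_cast
  simp only [zpow_natCast, mul_one]

theorem theta_pow_eq_sum (ε r s A : ℤ) (hε : ε ≠ 0) (hA : 0 < A) (hrs : r + s = A) (m : ℕ)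
    [NeZero m] :
    theta ε r s ^ m = ∑ c ∈ Finset.range m,
      single (r * c) ((ε : ℚ) ^ c) * theta (ε ^ m) (r * m + A * c) (s * m - A * c) *
        triSumSeries A hA m c := by
  have h : 0 < r + s := hrs ▸ hA
  have hm : 0 < (m : ℤ) := by exact_mod_cast Nat.pos_of_neZero m
  have hc (c : ℕ) : 0 < (r * m + A * c) + (s * m - A * c) := by
    rw [show (r * m + A * c) + (s * m - A * c) = A * m by rw [← hrs]; ring]
    exact mul_pos hA hm
  rw [theta_eq_hsum ε r s h, ← SummableFamily.hsum_pow,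
    SummableFamily.hsum_eq_sum_of_partition _ (Finset.range m)
      (fun c : ℕ ↦ single (r * c) ((ε : ℚ) ^ c) •
        (thetaFamily (ε ^ m) _ _ (hc c)).mul (triSumFamily A hA m c))
      (fun c : ℕ ↦ shiftEmbedding m c) ?_ ?_ ?_]
  · refine Finset.sum_congr rfl fun c _ ↦ ?_
    rw [SummableFamily.hsum_smul, SummableFamily.hsum_mul, ← theta_eq_hsum, triSumSeries,
      mul_assoc]
  · rintro c - ⟨t, w⟩
    rw [SummableFamily.smul_apply, of_symm_smul_of_eq_mul, SummableFamily.mul_toFun]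
    exact thetaFamily_pow_shiftEmbedding hε h hA hrs (hc c) w t
  · exact exists_mem_range_shiftEmbedding m
  · exact pairwiseDisjoint_range_shiftEmbedding m

theorem statement11_general (A A' k : ℤ) (hA : 1 ≤ A) (κ : ℕ)
    (m : ℕ) (hm : 1 ≤ m) :
    ∃ Ms : ℕ → LaurentSeries ℚ,
      (∀ s, s < m → (Ms s).support ⊆ {x : ℤ | ∃ j : ℕ, x = A * j}) ∧
      (theta ((-1) ^ κ) (k + A') (-k + (A - A')) ^ m =
        ∑ s ∈ Finset.range m,
          (-1 : LaurentSeries ℚ) ^ (κ * s)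
            * HahnSeries.single ((k + A') * (s : ℤ)) (1 : ℚ)
            * theta ((-1) ^ (κ * m)) (k * m + A * s + A' * m)
                (-(k * m) - A * s + (A - A') * m)
            * Ms s) ∧
      (∀ s : ℕ, 1 ≤ s → s ≤ m - 1 → Ms s = Ms (m - s)) := by
  have hA₀ : 0 < A := by omega
  have : NeZero m := ⟨by omega⟩
  refine ⟨fun s ↦ triSumSeries A hA₀ m s, fun s _ ↦ support_triSumSeries_subset A hA₀ m s,
    ?_, fun s _ hsm ↦ ?_⟩
  · rw [theta_pow_eq_sum _ _ _ A (pow_ne_zero κ (by norm_num)) hA₀ (by ring)]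
    refine Finset.sum_congr rfl fun s _ ↦ ?_
    have hsign : (-1 : LaurentSeries ℚ) ^ (κ * s) * single ((k + A') * s) 1 =
        single ((k + A') * s) ((((-1) ^ κ : ℤ) : ℚ) ^ s) := by
      rw [← map_one (C : ℚ →+* LaurentSeries ℚ), ← map_neg, ← map_pow, C_apply, single_mul_single,
        zero_add, mul_one, pow_mul]
      push_cast
      rfl
    rw [hsign, ← pow_mul]
    congr 3 <;> ring
  · change _ = triSumSeries A hA₀ m ((m - s : ℕ) : ℤ)
    rw [Nat.cast_sub (by omega), triSumSeries_sub]

/-- **Theorem (expansion of a theta power)**: for integers `A ≥ 1`, `A'`, `k`,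
`κ ∈ {0,1}` and `m ≥ 1`, there are Laurent series `𝓜₀, …, 𝓜_{m-1}` supported on
`{A·j : j ∈ ℕ}` with
`f((-1)^κ q^{k+A'}, (-1)^κ q^{-k+(A-A')})^m
  = Σ_{s=0}^{m-1} (-1)^{κs} q^{(k+A')s}
      f((-1)^{κm} q^{km+As+A'm}, (-1)^{κm} q^{-km-As+(A-A')m}) · 𝓜_s`,
and `𝓜_s = 𝓜_{m-s}` for `1 ≤ s ≤ m-1`. -/
theorem statement11 (A A' k : ℤ) (hA : 1 ≤ A) (κ : ℕ) (hκ : κ = 0 ∨ κ = 1)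
    (m : ℕ) (hm : 1 ≤ m) :
    ∃ Ms : ℕ → LaurentSeries ℚ,
      (∀ s, s < m → (Ms s).support ⊆ {x : ℤ | ∃ j : ℕ, x = A * j}) ∧
      (theta ((-1) ^ κ) (k + A') (-k + (A - A')) ^ m =
        ∑ s ∈ Finset.range m,
          (-1 : LaurentSeries ℚ) ^ (κ * s)
            * HahnSeries.single ((k + A') * (s : ℤ)) (1 : ℚ)
            * theta ((-1) ^ (κ * m)) (k * m + A * s + A' * m)
                (-(k * m) - A * s + (A - A') * m)
            * Ms s) ∧
      (∀ s : ℕ, 1 ≤ s → s ≤ m - 1 → Ms s = Ms (m - s)) :=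
  statement11_general A A' k hA κ m hm

end ThetaVanish
end
end

section
/- Let M be a positive integer and u, v integers. Set d* = gcd(u, v, M), d_u = gcd(u, M), d_v = gcd(v, M), u' = u/d_u, v' = v/d_v. Then d_u·d_v divides d*·M; set D = d*·M/(d_u·d_v). Suppose a₁, b₁, a₂, b₂ are integers with gcd(a₁, b₁) = 1 and gcd(a₂, b₂) = 1 such that D divides u'·a₁ + v'·a₂, D divides u'·b₁ + v'·b₂, and a₁·b₂ − a₂·b₁ = D or a₁·b₂ − a₂·b₁ = −D. Then { (m, n) ∈ ℤ² : M divides u·m + v·n } = { ( (d_v/d*)·(a₁·s + b₁·t), (d_u/d*)·(a₂·s + b₂·t) ) : s, t ∈ ℤ }. -/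
/-!
Write `g = gcd(u, v, M)`, `d_u = g c`, `d_v = g e`. Then `gcd(u, d_v) = gcd(v, d_u) = gcd(d_u, d_v) = g`,
so `d_u d_v = g · lcm(d_u, d_v)` divides `g M`, and `M = g c e D`. Reducing `M ∣ u m + v n`
modulo `d_v` and `d_u` forces `m = e m₁`, `n = c n₁`, after which the congruence becomes
`D ∣ u' m₁ + v' n₁`. As `u'` is prime to `D`, this congruence cuts out a lattice of index `D`;
it contains the lattice spanned by `(a₁, a₂)` and `(b₁, b₂)`, which also has index `|a₁b₂ - a₂b₁| = D`,
so the two coincide (concretely, by Cramer's rule).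
-/

theorem Int.gcd_gcd_gcd_right (a b c : ℤ) :
    Int.gcd (Int.gcd a c) (Int.gcd b c) = Int.gcd (Int.gcd a b) c := by
  simp only [Int.gcd_eq_natAbs, Int.natAbs_natCast]
  rw [Nat.gcd_assoc, Nat.gcd_comm c.natAbs, Nat.gcd_assoc, Nat.gcd_self, ← Nat.gcd_assoc]

theorem Int.gcd_mul_gcd_dvd_gcd_gcd_mul (u v M : ℤ) :
    (Int.gcd u M * Int.gcd v M : ℤ) ∣ Int.gcd (Int.gcd u v) M * M := by
  have hlcm : (Int.lcm (Int.gcd u M) (Int.gcd v M) : ℤ) ∣ M :=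
    Int.coe_lcm_dvd_iff.mpr ⟨Int.gcd_dvd_right _ _, Int.gcd_dvd_right _ _⟩
  have h := Int.gcd_mul_lcm (Int.gcd u M) (Int.gcd v M)
  rw [Int.gcd_gcd_gcd_right, Int.natAbs_natCast, Int.natAbs_natCast] at h
  rw [← Nat.cast_mul, ← h, Nat.cast_mul]
  exact mul_dvd_mul_left _ hlcm

theorem Int.isCoprime_of_gcd_mul_mul_eq {g a b : ℤ} (hg : g ≠ 0)
    (h : Int.gcd (g * a) (g * b) = g.natAbs) : IsCoprime a b := by
  rw [Int.gcd_mul_left] at h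
  exact Int.isCoprime_iff_gcd_eq_one.mpr <|
    (Nat.mul_eq_left (Int.natAbs_ne_zero.mpr hg)).mp h

theorem Int.isCoprime_div_gcd_of_mul_dvd {u M D : ℤ} (hM : M ≠ 0)
    (h : Int.gcd u M * D ∣ M) : IsCoprime (u / Int.gcd u M) D := by
  obtain ⟨k, hk⟩ := h
  have hcop := Int.isCoprime_iff_gcd_eq_one.mpr
    (Int.gcd_div_gcd_div_gcd (Int.gcd_pos_of_ne_zero_right u hM))
  rw [Int.ediv_eq_of_eq_mul_right (by exact_mod_cast (Int.gcd_pos_of_ne_zero_right u hM).ne')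
    (hk.trans (mul_assoc _ D k))] at hcop
  exact hcop.of_isCoprime_of_dvd_right (dvd_mul_right D k)

theorem exists_eq_add_mul_of_det_dvd {a₁ b₁ a₂ b₂ x y : ℤ} (hΔ : a₁ * b₂ - a₂ * b₁ ≠ 0)
    (hx : a₁ * b₂ - a₂ * b₁ ∣ b₂ * x - b₁ * y) (hy : a₁ * b₂ - a₂ * b₁ ∣ a₁ * y - a₂ * x) :
    ∃ s t, x = a₁ * s + b₁ * t ∧ y = a₂ * s + b₂ * t := by
  obtain ⟨s, hs⟩ := hx
  obtain ⟨t, ht⟩ := hy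
  refine ⟨s, t, mul_left_cancel₀ hΔ ?_, mul_left_cancel₀ hΔ ?_⟩
  · linear_combination a₁ * hs + b₁ * ht
  · linear_combination a₂ * hs + b₂ * ht

theorem dvd_add_mul_iff_exists_eq {D p q a₁ b₁ a₂ b₂ : ℤ} (hD : D ≠ 0) (hpD : IsCoprime p D)
    (ha : D ∣ p * a₁ + q * a₂) (hb : D ∣ p * b₁ + q * b₂)
    (hdet : a₁ * b₂ - a₂ * b₁ = D ∨ a₁ * b₂ - a₂ * b₁ = -D) (x y : ℤ) :
    D ∣ p * x + q * y ↔ ∃ s t, x = a₁ * s + b₁ * t ∧ y = a₂ * s + b₂ * t := by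
  constructor
  · intro hxy
    have hdvd_iff : ∀ z, a₁ * b₂ - a₂ * b₁ ∣ z ↔ D ∣ z := by
      rcases hdet with h | h <;> simp [h]
    have hΔ : a₁ * b₂ - a₂ * b₁ ≠ 0 := by rcases hdet with h | h <;> simp [h, hD]
    refine exists_eq_add_mul_of_det_dvd hΔ ((hdvd_iff _).mpr ?_) ((hdvd_iff _).mpr ?_)
    · refine hpD.symm.dvd_of_dvd_mul_left ?_
      have h : p * (b₂ * x - b₁ * y) = b₂ * (p * x + q * y) - y * (p * b₁ + q * b₂) := by ring
      rw [h]
      exact dvd_sub (dvd_mul_of_dvd_right hxy _) (dvd_mul_of_dvd_right hb _)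
    · refine hpD.symm.dvd_of_dvd_mul_left ?_
      have h : p * (a₁ * y - a₂ * x) = y * (p * a₁ + q * a₂) - a₂ * (p * x + q * y) := by ring
      rw [h]
      exact dvd_sub (dvd_mul_of_dvd_right ha _) (dvd_mul_of_dvd_right hxy _)
  · rintro ⟨s, t, rfl, rfl⟩
    have h : p * (a₁ * s + b₁ * t) + q * (a₂ * s + b₂ * t) =
        s * (p * a₁ + q * a₂) + t * (p * b₁ + q * b₂) := by ring
    rw [h]
    exact dvd_add (dvd_mul_of_dvd_right ha s) (dvd_mul_of_dvd_right hb t)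

theorem dvd_add_mul_iff_exists_mul {g c e D u' v' : ℤ} (hgce : g * c * e ≠ 0)
    (hcu : IsCoprime (c * u') e) (hev : IsCoprime (e * v') c) (m n : ℤ) :
    g * c * e * D ∣ g * c * u' * m + g * e * v' * n ↔
      ∃ m₁ n₁, m = e * m₁ ∧ n = c * n₁ ∧ D ∣ u' * m₁ + v' * n₁ := by
  have hg : g ≠ 0 := left_ne_zero_of_mul (left_ne_zero_of_mul hgce)
  have hsum : ∀ m₁ n₁, g * c * u' * (e * m₁) + g * e * v' * (c * n₁) =
      g * c * e * (u' * m₁ + v' * n₁) := fun _ _ ↦ by ring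
  constructor
  · intro h
    have hem : e ∣ m := by
      have hge : g * e ∣ g * c * u' * m + g * e * v' * n := dvd_trans ⟨c * D, by ring⟩ h
      rw [dvd_add_left (show g * e ∣ g * e * v' * n from ⟨v' * n, by ring⟩), mul_assoc g c,
        mul_assoc g, mul_dvd_mul_iff_left hg] at hge
      exact hcu.symm.dvd_of_dvd_mul_left hge
    have hcn : c ∣ n := by
      have hgc : g * c ∣ g * c * u' * m + g * e * v' * n := dvd_trans ⟨e * D, by ring⟩ h
      rw [dvd_add_right (show g * c ∣ g * c * u' * m from ⟨u' * m, by ring⟩), mul_assoc g e,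
        mul_assoc g, mul_dvd_mul_iff_left hg] at hgc
      exact hev.symm.dvd_of_dvd_mul_left hgc
    obtain ⟨m₁, rfl⟩ := hem
    obtain ⟨n₁, rfl⟩ := hcn
    rw [hsum, mul_dvd_mul_iff_left hgce] at h
    exact ⟨m₁, n₁, rfl, rfl, h⟩
  · rintro ⟨m₁, n₁, rfl, rfl, h⟩
    rw [hsum]
    exact mul_dvd_mul_left _ h

theorem setOf_dvd_add_mul_eq {g c e D u' v' a₁ b₁ a₂ b₂ : ℤ} (hgce : g * c * e ≠ 0) (hD : D ≠ 0)
    (hcu : IsCoprime (c * u') e) (hev : IsCoprime (e * v') c) (huD : IsCoprime u' D)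
    (ha : D ∣ u' * a₁ + v' * a₂) (hb : D ∣ u' * b₁ + v' * b₂)
    (hdet : a₁ * b₂ - a₂ * b₁ = D ∨ a₁ * b₂ - a₂ * b₁ = -D) :
    {p : ℤ × ℤ | g * c * e * D ∣ g * c * u' * p.1 + g * e * v' * p.2} =
      {p : ℤ × ℤ | ∃ s t : ℤ, p = (e * (a₁ * s + b₁ * t), c * (a₂ * s + b₂ * t))} := by
  ext ⟨m, n⟩
  simp only [Set.mem_ofPred_eq, Prod.mk.injEq, dvd_add_mul_iff_exists_mul hgce hcu hev,
    dvd_add_mul_iff_exists_eq hD huD ha hb hdet]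
  constructor
  · rintro ⟨m₁, n₁, rfl, rfl, s, t, rfl, rfl⟩
    exact ⟨s, t, rfl, rfl⟩
  · rintro ⟨s, t, rfl, rfl⟩
    exact ⟨_, _, rfl, rfl, s, t, rfl, rfl⟩

theorem statement13_general (M u v : ℤ) (hM : 0 < M)
    (dstar du dv u' v' D : ℤ)
    (hdstar : dstar = (Int.gcd (Int.gcd u v : ℤ) M : ℤ))
    (hdu : du = (Int.gcd u M : ℤ)) (hdv : dv = (Int.gcd v M : ℤ))
    (hu' : u' = u / du) (hv' : v' = v / dv)
    (hD : D = dstar * M / (du * dv))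
    (a₁ b₁ a₂ b₂ : ℤ)
    (ha : D ∣ u' * a₁ + v' * a₂) (hb : D ∣ u' * b₁ + v' * b₂)
    (hdet : a₁ * b₂ - a₂ * b₁ = D ∨ a₁ * b₂ - a₂ * b₁ = -D) :
    du * dv ∣ dstar * M ∧
      {p : ℤ × ℤ | M ∣ u * p.1 + v * p.2} =
        {p : ℤ × ℤ | ∃ s t : ℤ,
          p = ((dv / dstar) * (a₁ * s + b₁ * t), (du / dstar) * (a₂ * s + b₂ * t))} := by
  have hdvd : du * dv ∣ dstar * M := by
    rw [hdu, hdv, hdstar]; exact Int.gcd_mul_gcd_dvd_gcd_gcd_mul u v M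
  refine ⟨hdvd, ?_⟩
  have hg0 : dstar ≠ 0 := by
    rw [hdstar]; exact_mod_cast (Int.gcd_pos_of_ne_zero_right _ hM.ne').ne'
  have hg : dstar = Int.gcd du dv := by rw [hdu, hdv, hdstar, Int.gcd_gcd_gcd_right]
  obtain ⟨c, hc⟩ : dstar ∣ du := hg ▸ Int.gcd_dvd_left _ _
  obtain ⟨e, he⟩ : dstar ∣ dv := hg ▸ Int.gcd_dvd_right _ _
  have hu : u = dstar * c * u' := by
    rw [← hc, hu', Int.mul_ediv_cancel' (hdu ▸ Int.gcd_dvd_left _ _)]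
  have hv : v = dstar * e * v' := by
    rw [← he, hv', Int.mul_ediv_cancel' (hdv ▸ Int.gcd_dvd_left _ _)]
  have hMD : M = dstar * c * e * D := by
    have h := Int.ediv_mul_cancel hdvd
    rw [← hD, hc, he] at h
    exact mul_left_cancel₀ hg0 (by linear_combination -h)
  have hgce : dstar * c * e ≠ 0 := left_ne_zero_of_mul (hMD ▸ hM.ne')
  have hnatAbs : dstar.natAbs = Int.gcd (Int.gcd u v) M := by rw [hdstar, Int.natAbs_natCast]
  have hcu : IsCoprime (c * u') e := Int.isCoprime_of_gcd_mul_mul_eq hg0 <| by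
    rw [← mul_assoc, ← hu, ← he, hdv, hnatAbs, ← Int.gcd_assoc]
  have hev : IsCoprime (e * v') c := Int.isCoprime_of_gcd_mul_mul_eq hg0 <| by
    rw [← mul_assoc, ← hv, ← hc, hdu, hnatAbs, Int.gcd_left_comm, ← Int.gcd_assoc]
  have huD : IsCoprime u' D := by
    rw [hu', hdu]
    exact Int.isCoprime_div_gcd_of_mul_dvd hM.ne' ⟨e, by rw [← hdu, hMD, hc]; ring⟩
  rw [he, hc, Int.mul_ediv_cancel_left _ hg0, Int.mul_ediv_cancel_left _ hg0, hMD, hu, hv]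
  exact setOf_dvd_add_mul_eq hgce (right_ne_zero_of_mul (hMD ▸ hM.ne')) hcu hev huD ha hb hdet

/-- **Lemma (solution set of a homogeneous linear congruence as a sublattice of ℤ²)**:
with `d* = gcd(u, v, M)`, `d_u = gcd(u, M)`, `d_v = gcd(v, M)`, `u' = u/d_u`,
`v' = v/d_v`, one has `d_u·d_v ∣ d*·M`; and if `a₁, b₁, a₂, b₂` are integers with
`gcd(a₁, b₁) = gcd(a₂, b₂) = 1`, `D ∣ u'a₁ + v'a₂`, `D ∣ u'b₁ + v'b₂` and
`a₁b₂ - a₂b₁ = ±D`, where `D = d*·M/(d_u·d_v)`, then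
`{(m, n) : M ∣ um + vn} = {((d_v/d*)(a₁s + b₁t), (d_u/d*)(a₂s + b₂t)) : s, t ∈ ℤ}`. -/
theorem statement13 (M u v : ℤ) (hM : 0 < M)
    (dstar du dv u' v' D : ℤ)
    (hdstar : dstar = (Int.gcd (Int.gcd u v : ℤ) M : ℤ))
    (hdu : du = (Int.gcd u M : ℤ)) (hdv : dv = (Int.gcd v M : ℤ))
    (hu' : u' = u / du) (hv' : v' = v / dv)
    (hD : D = dstar * M / (du * dv))
    (a₁ b₁ a₂ b₂ : ℤ) (hab₁ : Int.gcd a₁ b₁ = 1) (hab₂ : Int.gcd a₂ b₂ = 1)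
    (ha : D ∣ u' * a₁ + v' * a₂) (hb : D ∣ u' * b₁ + v' * b₂)
    (hdet : a₁ * b₂ - a₂ * b₁ = D ∨ a₁ * b₂ - a₂ * b₁ = -D) :
    du * dv ∣ dstar * M ∧
      {p : ℤ × ℤ | M ∣ u * p.1 + v * p.2} =
        {p : ℤ × ℤ | ∃ s t : ℤ,
          p = ((dv / dstar) * (a₁ * s + b₁ * t), (du / dstar) * (a₂ * s + b₂ * t))} :=
  statement13_general M u v hM dstar du dv u' v' D hdstar hdu hdv hu' hv' hD a₁ b₁ a₂ b₂ ha hb hdet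
end

section
/- Let M be a positive integer and u, v, w integers with (u, v) ≠ (0, 0). Set d* = gcd(u, v, M), d = gcd(u, v), d_u = gcd(u, M), d_v = gcd(v, M), and assume d* divides w. Let (m₀, n₀) be a pair of integers such that M divides u·m₀ + v·n₀ + w, and let (α, β) be a pair of integers such that u·d_v·α + v·d_u·β = d·M. Then { (m, n) ∈ ℤ² : M divides u·m + v·n + w } = { ( α·s·(d_v/d*) − (v/d)·t + m₀, β·s·(d_u/d*) + (u/d)·t + n₀ ) : s, t ∈ ℤ }. -/
/-!
For the shifts `x = m - m₀`, `y = n - n₀` the congruence reads `M ∣ d·((u/d)·x + (v/d)·y)`, and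
since `d/d*` is a unit modulo `M/d*` this is `M/d* ∣ (u/d)·x + (v/d)·y`. Dividing the equation
for `(α, β)` by `d·d*` shows that `(α·(d_v/d*), β·(d_u/d*))` solves `(u/d)·x + (v/d)·y = M/d*`.
As `u/d` and `v/d` are coprime, the solutions of the divisibility are the integer multiples of
this particular solution plus those of `(u/d)·x + (v/d)·y = 0`, i.e. the multiples of `(-v/d, u/d)`.
-/

theorem IsCoprime.mul_add_mul_eq_zero_iff {R : Type*} [CommRing R] {a b : R}
    (hab : IsCoprime a b) (x y : R) :
    a * x + b * y = 0 ↔ ∃ t, x = -b * t ∧ y = a * t := by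
  constructor
  · intro h
    obtain ⟨p, q, hpq⟩ := hab
    exact ⟨p * y - q * x, by linear_combination (-x) * hpq + p * h,
      by linear_combination (-y) * hpq + q * h⟩
  · rintro ⟨t, rfl, rfl⟩
    ring

theorem IsCoprime.dvd_mul_add_mul_iff {R : Type*} [CommRing R] {a b N x₀ y₀ : R}
    (hab : IsCoprime a b) (h₀ : a * x₀ + b * y₀ = N) (x y : R) :
    N ∣ a * x + b * y ↔ ∃ s t, x = x₀ * s - b * t ∧ y = y₀ * s + a * t := by
  constructor
  · rintro ⟨s, hs⟩
    have hom : a * (x - x₀ * s) + b * (y - y₀ * s) = 0 := by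
      linear_combination hs - s * h₀
    obtain ⟨t, hx, hy⟩ := (hab.mul_add_mul_eq_zero_iff _ _).1 hom
    exact ⟨s, t, by linear_combination hx, by linear_combination hy⟩
  · rintro ⟨s, t, rfl, rfl⟩
    exact ⟨s, by linear_combination s * h₀⟩

theorem Int.isCoprime_ediv_gcd_ediv_gcd {a b : ℤ} (h : a ≠ 0 ∨ b ≠ 0) :
    IsCoprime (a / Int.gcd a b) (b / Int.gcd a b) :=
  Int.isCoprime_iff_gcd_eq_one.2 (Int.gcd_div_gcd_div_gcd (Int.gcd_pos_iff.2 h))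

theorem Int.dvd_mul_iff_ediv_gcd_dvd {d M : ℤ} (h : d ≠ 0 ∨ M ≠ 0) (X : ℤ) :
    M ∣ d * X ↔ M / Int.gcd d M ∣ X := by
  obtain ⟨d', M', hcop, hd, hM⟩ := Int.exists_gcd_one (Int.gcd_pos_iff.2 h)
  have hg : (Int.gcd d M : ℤ) ≠ 0 := by exact_mod_cast (Int.gcd_pos_iff.2 h).ne'
  have hcop' : IsCoprime M' d' := Int.isCoprime_iff_gcd_eq_one.2 (by rwa [Int.gcd_comm])
  generalize (Int.gcd d M : ℤ) = g at hd hM hg ⊢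
  subst hd hM
  rw [mul_right_comm, mul_dvd_mul_iff_right hg, Int.mul_ediv_cancel _ hg]
  exact ⟨hcop'.dvd_of_dvd_mul_left, fun h => h.mul_left d'⟩

theorem dvd_mul_add_mul_add_iff_dvd_sub {R : Type*} [CommRing R] {M u v w m₀ n₀ : R}
    (h₀ : M ∣ u * m₀ + v * n₀ + w) (m n : R) :
    M ∣ u * m + v * n + w ↔ M ∣ u * (m - m₀) + v * (n - n₀) := by
  have hshift :
      u * m + v * n + w = u * (m - m₀) + v * (n - n₀) + (u * m₀ + v * n₀ + w) := by
    ring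
  rw [hshift, dvd_add_left h₀]

theorem Int.ediv_mul_add_ediv_mul_eq_ediv {u v d du dv g M α β : ℤ}
    (hd : d ≠ 0) (hg : g ≠ 0) (hdu : d ∣ u) (hdv : d ∣ v)
    (hgdu : g ∣ du) (hgdv : g ∣ dv) (hgM : g ∣ M)
    (h : u * dv * α + v * du * β = d * M) :
    u / d * (α * (dv / g)) + v / d * (β * (du / g)) = M / g := by
  apply mul_left_cancel₀ (mul_ne_zero hd hg)
  rw [← Int.mul_ediv_cancel' hdu, ← Int.mul_ediv_cancel' hdv, ← Int.mul_ediv_cancel' hgdv,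
    ← Int.mul_ediv_cancel' hgdu, ← Int.mul_ediv_cancel' hgM] at h
  linear_combination h

theorem statement15_general (M u v w : ℤ) (huv : (u, v) ≠ (0, 0))
    (dstar d du dv : ℤ)
    (hdstar : dstar = (Int.gcd (Int.gcd u v : ℤ) M : ℤ))
    (hd : d = (Int.gcd u v : ℤ))
    (hdu : du = (Int.gcd u M : ℤ)) (hdv : dv = (Int.gcd v M : ℤ))
    (m₀ n₀ : ℤ) (h₀ : M ∣ u * m₀ + v * n₀ + w)
    (α β : ℤ) (hαβ : u * dv * α + v * du * β = d * M) :
    {p : ℤ × ℤ | M ∣ u * p.1 + v * p.2 + w} =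
      {p : ℤ × ℤ | ∃ s t : ℤ,
        p = (α * s * (dv / dstar) - (v / d) * t + m₀,
             β * s * (du / dstar) + (u / d) * t + n₀)} := by
  have huv' : u ≠ 0 ∨ v ≠ 0 := by rwa [Ne, Prod.mk.injEq, not_and_or] at huv
  have hd0 : d ≠ 0 := hd ▸ Int.natCast_ne_zero.2 (Int.gcd_pos_iff.2 huv').ne'
  have hdstar0 : dstar ≠ 0 := by
    rw [hdstar, ← hd]
    exact Int.natCast_ne_zero.2 (Int.gcd_pos_iff.2 (Or.inl hd0)).ne'
  have hcop : IsCoprime (u / d) (v / d) := hd ▸ Int.isCoprime_ediv_gcd_ediv_gcd huv'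
  have hdu' : d ∣ u := hd ▸ Int.gcd_dvd_left u v
  have hdv' : d ∣ v := hd ▸ Int.gcd_dvd_right u v
  have hdstar_M : dstar ∣ M := hdstar ▸ Int.gcd_dvd_right _ _
  have hdstar_du : dstar ∣ du := hdstar ▸ hdu ▸
    Int.natCast_dvd_natCast.2 (Int.gcd_dvd_gcd_of_dvd_left M (Int.gcd_dvd_left u v))
  have hdstar_dv : dstar ∣ dv := hdstar ▸ hdv ▸
    Int.natCast_dvd_natCast.2 (Int.gcd_dvd_gcd_of_dvd_left M (Int.gcd_dvd_right u v))
  have key :=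
    Int.ediv_mul_add_ediv_mul_eq_ediv hd0 hdstar0 hdu' hdv' hdstar_du hdstar_dv hdstar_M hαβ
  have hreduce (X : ℤ) : M ∣ d * X ↔ M / dstar ∣ X := by
    rw [hdstar, ← hd]
    exact Int.dvd_mul_iff_ediv_gcd_dvd (Or.inl hd0) X
  ext ⟨m, n⟩
  have hsplit :
      u * (m - m₀) + v * (n - n₀) = d * (u / d * (m - m₀) + v / d * (n - n₀)) := by
    rw [mul_add, ← mul_assoc, ← mul_assoc, Int.mul_ediv_cancel' hdu', Int.mul_ediv_cancel' hdv']
  simp only [Set.mem_ofPred_eq, dvd_mul_add_mul_add_iff_dvd_sub h₀, hsplit, hreduce,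
    hcop.dvd_mul_add_mul_iff key, Prod.ext_iff]
  refine exists₂_congr fun s t => and_congr ?_ ?_ <;> constructor <;> intro h <;>
    linear_combination h

/-- **Theorem (solution set of an inhomogeneous linear congruence)**: with
`d* = gcd(u, v, M)`, `d = gcd(u, v)`, `d_u = gcd(u, M)`, `d_v = gcd(v, M)`,
`d* ∣ w`, a particular solution `(m₀, n₀)` of `u·m₀ + v·n₀ + w ≡ 0 (mod M)`,
and `(α, β)` a solution of `u·d_v·x + v·d_u·y = d·M`, the solution set of
`u·m + v·n + w ≡ 0 (mod M)` is
`{(α·s·(d_v/d*) - (v/d)·t + m₀, β·s·(d_u/d*) + (u/d)·t + n₀) : s, t ∈ ℤ}`. -/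
theorem statement15 (M u v w : ℤ) (hM : 0 < M) (huv : (u, v) ≠ (0, 0))
    (dstar d du dv : ℤ)
    (hdstar : dstar = (Int.gcd (Int.gcd u v : ℤ) M : ℤ))
    (hd : d = (Int.gcd u v : ℤ))
    (hdu : du = (Int.gcd u M : ℤ)) (hdv : dv = (Int.gcd v M : ℤ))
    (hw : dstar ∣ w)
    (m₀ n₀ : ℤ) (h₀ : M ∣ u * m₀ + v * n₀ + w)
    (α β : ℤ) (hαβ : u * dv * α + v * du * β = d * M) :
    {p : ℤ × ℤ | M ∣ u * p.1 + v * p.2 + w} =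
      {p : ℤ × ℤ | ∃ s t : ℤ,
        p = (α * s * (dv / dstar) - (v / d) * t + m₀,
             β * s * (du / dstar) + (u / d) * t + n₀)} :=
  statement15_general M u v w huv dstar d du dv hdstar hd hdu hdv m₀ n₀ h₀ α β hαβ
end
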